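/- Let (A, B, R) be a VH-datum with parameters (m,n) and let M₁, M₂ be its transition matrices, regarded as integer matrices indexed by R×R. Then M₁M₂ = M₂M₁, and every entry of the product M₁M₂ is 0 or 1. -/
import Mathlib


/-- A VH-datum with parameters `(m,n)`: finite sets `A`, `B` of even
cardinalities `m, n ≥ 4` with fixed-point-free involutions, together with a set
`R ⊆ A × B × B × A` satisfying the Burger–Mozes conditions (i)–(iii). -/
structure VHDatum (m n : ℕ) (A B : Type) [Fintype A] [Fintype B]
    [DecidableEq A] [DecidableEq B] where
  cardA : Fintype.card A = m
  cardB : Fintype.card B = n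
  four_le_m : 4 ≤ m
  four_le_n : 4 ≤ n
  even_m : Even m
  even_n : Even n
  invA : A → A
  invB : B → B
  invA_invA : ∀ a, invA (invA a) = a
  invB_invB : ∀ b, invB (invB b) = b
  invA_ne : ∀ a, invA a ≠ a
  invB_ne : ∀ b, invB b ≠ b
  R : Finset (A × B × B × A)
  cond_i : ∀ a b b' a', (a, b, b', a') ∈ R →
    (invA a, b', b, invA a') ∈ R ∧ (invA a', invB b', invB b, invA a) ∈ R ∧
    (a', invB b, invB b', a) ∈ R
  cond_ii : ∀ a b, (a, b, invB b, invA a) ∉ R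
  cond_iii_ab : Set.BijOn (fun x : A × B × B × A => (x.1, x.2.1)) ↑R Set.univ
  cond_iii_ab' : Set.BijOn (fun x : A × B × B × A => (x.1, x.2.2.1)) ↑R Set.univ
  cond_iii_a'b : Set.BijOn (fun x : A × B × B × A => (x.2.2.2, x.2.1)) ↑R Set.univ
  cond_iii_a'b' : Set.BijOn (fun x : A × B × B × A => (x.2.2.2, x.2.2.1)) ↑R Set.univ

variable {m n : ℕ} {A B : Type} [Fintype A] [Fintype B] [DecidableEq A] [DecidableEq B]

/-- The horizontal transition matrix `M₁`: for `r = (a,b,b′,a′)` and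
`s = (c,d,d′,c′)` in `R`, `M₁(s,r) = 1` iff `d′ = b` and `c ≠ a⁻¹`. -/
def VHDatum.M1 (D : VHDatum m n A B) : Matrix D.R D.R ℤ := fun s r =>
  if (s : A × B × B × A).2.2.1 = (r : A × B × B × A).2.1 ∧
      (s : A × B × B × A).1 ≠ D.invA (r : A × B × B × A).1 then 1 else 0

/-- The vertical transition matrix `M₂`: for `r = (a,b,b′,a′)` and
`s = (c,d,d′,c′)` in `R`, `M₂(s,r) = 1` iff `c = a′` and `d ≠ b⁻¹`. -/
def VHDatum.M2 (D : VHDatum m n A B) : Matrix D.R D.R ℤ := fun s r =>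
  if (s : A × B × B × A).1 = (r : A × B × B × A).2.2.2 ∧
      (s : A × B × B × A).2.1 ≠ D.invB (r : A × B × B × A).2.1 then 1 else 0
namespace VHDatum

lemma inj_ab (D : VHDatum m n A B) {x y : A × B × B × A} (hx : x ∈ D.R) (hy : y ∈ D.R)
    (h1 : x.1 = y.1) (h2 : x.2.1 = y.2.1) : x = y :=
  D.cond_iii_ab.injOn (Finset.mem_coe.2 hx) (Finset.mem_coe.2 hy)
    (by simp only [Prod.mk.injEq]; exact ⟨h1, h2⟩)

lemma inj_a'b' (D : VHDatum m n A B) {x y : A × B × B × A} (hx : x ∈ D.R) (hy : y ∈ D.R)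
    (h1 : x.2.2.2 = y.2.2.2) (h2 : x.2.2.1 = y.2.2.1) : x = y :=
  D.cond_iii_a'b'.injOn (Finset.mem_coe.2 hx) (Finset.mem_coe.2 hy)
    (by simp only [Prod.mk.injEq]; exact ⟨h1, h2⟩)

lemma exists_ab (D : VHDatum m n A B) (p : A × B) :
    ∃ x, x ∈ D.R ∧ x.1 = p.1 ∧ x.2.1 = p.2 := by
  obtain ⟨x, hx, hfx⟩ := D.cond_iii_ab.surjOn (Set.mem_univ p)
  exact ⟨x, Finset.mem_coe.1 hx, congrArg Prod.fst hfx, congrArg Prod.snd hfx⟩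

lemma exists_a'b' (D : VHDatum m n A B) (p : A × B) :
    ∃ x, x ∈ D.R ∧ x.2.2.2 = p.1 ∧ x.2.2.1 = p.2 := by
  obtain ⟨x, hx, hfx⟩ := D.cond_iii_a'b'.surjOn (Set.mem_univ p)
  exact ⟨x, Finset.mem_coe.1 hx, congrArg Prod.fst hfx, congrArg Prod.snd hfx⟩

/-- Claim 1: with `r = (a,b,b',a') ∈ R` and `t = (e,f,b,c) ∈ R`, we have
`e = a⁻¹ ↔ c = a'⁻¹`. -/
lemma claim1 (D : VHDatum m n A B) {a a' c e : A} {b b' f : B}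
    (hr : (a, b, b', a') ∈ D.R) (ht : (e, f, b, c) ∈ D.R) :
    e = D.invA a ↔ c = D.invA a' := by
  constructor
  · rintro rfl
    have h := (D.cond_i _ _ _ _ ht).1
    rw [D.invA_invA] at h
    have h2 := D.inj_ab hr h rfl rfl
    simp only [Prod.mk.injEq] at h2
    rw [h2.2.2.2, D.invA_invA]
  · rintro rfl
    have h := (D.cond_i _ _ _ _ hr).1
    have h2 := D.inj_a'b' ht h rfl rfl
    simp only [Prod.mk.injEq] at h2
    exact h2.1

/-- Claim 2: with `s = (c,d,d',c') ∈ R` and `t = (e,f,b,c) ∈ R`, we have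
`d = f⁻¹ ↔ d' = b⁻¹`. -/
lemma claim2 (D : VHDatum m n A B) {c c' e : A} {b d d' f : B}
    (hs : (c, d, d', c') ∈ D.R) (ht : (e, f, b, c) ∈ D.R) :
    d = D.invB f ↔ d' = D.invB b := by
  constructor
  · intro hd
    have h := (D.cond_i _ _ _ _ ht).2.2
    rw [← hd] at h
    have h2 := D.inj_ab hs h rfl rfl
    simp only [Prod.mk.injEq] at h2
    exact h2.2.2.1
  · intro hd'
    have h := (D.cond_i _ _ _ _ hs).2.2
    rw [hd', D.invB_invB] at h
    have h2 := D.inj_a'b' ht h rfl rfl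
    simp only [Prod.mk.injEq] at h2
    rw [h2.2.1, D.invB_invB]

end VHDatum
namespace VHDatum

lemma exists_a'b'' (D : VHDatum m n A B) (c : A) (b : B) :
    ∃ e f, (e, f, b, c) ∈ D.R := by
  obtain ⟨⟨e, f, f', e'⟩, hx, h1, h2⟩ := D.exists_a'b' (c, b)
  simp only at h1 h2
  subst h1; subst h2
  exact ⟨e, f, hx⟩

lemma ite_one_zero_mul {P Q : Prop} [Decidable P] [Decidable Q] :
    (if P then (1:ℤ) else 0) * (if Q then (1:ℤ) else 0) = if P ∧ Q then 1 else 0 := by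
  by_cases hP : P <;> by_cases hQ : Q <;> simp [hP, hQ]

end VHDatum
/-- the transition matrices commute, `M₁M₂ = M₂M₁`, and every
entry of `M₁M₂` is `0` or `1`. -/
theorem VHDatum.M1_M2_commute_and_zero_one (D : VHDatum m n A B) :
    D.M1 * D.M2 = D.M2 * D.M1 ∧
    ∀ s r : D.R, (D.M1 * D.M2) s r = 0 ∨ (D.M1 * D.M2) s r = 1 := by
  have key : ∀ s r : D.R, (D.M1 * D.M2) s r =
      if ((s : A × B × B × A).2.2.1 ≠ D.invB (r : A × B × B × A).2.1 ∧
          (s : A × B × B × A).1 ≠ D.invA (r : A × B × B × A).2.2.2) then 1 else 0 := by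
    rintro ⟨⟨c, d, d', c'⟩, hs⟩ ⟨⟨a, b, b', a'⟩, hr⟩
    show _ = if (d' ≠ D.invB b ∧ c ≠ D.invA a') then 1 else 0
    rw [Matrix.mul_apply]
    obtain ⟨t₀, ht₀R, ht₀1, ht₀2⟩ := D.exists_ab (a', d')
    simp only at ht₀1 ht₀2
    have hterm : ∀ t : D.R, D.M1 ⟨(c, d, d', c'), hs⟩ t * D.M2 t ⟨(a, b, b', a'), hr⟩ =
        if t = ⟨t₀, ht₀R⟩ ∧ (d' ≠ D.invB b ∧ c ≠ D.invA a') then 1 else 0 := by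
      rintro ⟨⟨e, f, f', e'⟩, ht⟩
      show (if (d' = f ∧ c ≠ D.invA e) then (1:ℤ) else 0) *
          (if (e = a' ∧ f ≠ D.invB b) then (1:ℤ) else 0) = _
      rw [ite_one_zero_mul]
      refine if_congr ?_ rfl rfl
      constructor
      · rintro ⟨⟨h1, hc⟩, h3, hf⟩
        have heq := D.inj_ab ht ht₀R (h3.trans ht₀1.symm) (h1.symm.trans ht₀2.symm)
        exact ⟨Subtype.ext heq, by rw [h1]; exact hf, by rw [← h3]; exact hc⟩
      · rintro ⟨hteq, hd', hc⟩
        have heq : (e, f, f', e') = t₀ := congrArg Subtype.val hteq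
        have h1 : e = a' := by rw [show e = t₀.1 from congrArg Prod.fst heq, ht₀1]
        have h2 : f = d' := by
          rw [show f = t₀.2.1 from congrArg (fun x : A × B × B × A => x.2.1) heq, ht₀2]
        exact ⟨⟨h2.symm, by rw [h1]; exact hc⟩, h1, by rw [h2]; exact hd'⟩
    rw [Finset.sum_congr rfl (fun t _ => hterm t)]
    by_cases hQ : d' ≠ D.invB b ∧ c ≠ D.invA a'
    · simp [hQ, Finset.sum_ite_eq']
    · simp [hQ]
  have key2 : ∀ s r : D.R, (D.M2 * D.M1) s r =
      if ((s : A × B × B × A).2.2.1 ≠ D.invB (r : A × B × B × A).2.1 ∧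
          (s : A × B × B × A).1 ≠ D.invA (r : A × B × B × A).2.2.2) then 1 else 0 := by
    rintro ⟨⟨c, d, d', c'⟩, hs⟩ ⟨⟨a, b, b', a'⟩, hr⟩
    show _ = if (d' ≠ D.invB b ∧ c ≠ D.invA a') then 1 else 0
    rw [Matrix.mul_apply]
    obtain ⟨e, f, ht₂R⟩ := D.exists_a'b'' c b
    have hterm : ∀ t : D.R, D.M2 ⟨(c, d, d', c'), hs⟩ t * D.M1 t ⟨(a, b, b', a'), hr⟩ =
        if t = ⟨(e, f, b, c), ht₂R⟩ ∧ (d' ≠ D.invB b ∧ c ≠ D.invA a') then 1 else 0 := by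
      rintro ⟨⟨g, h, h', g'⟩, ht⟩
      show (if (c = g' ∧ d ≠ D.invB h) then (1:ℤ) else 0) *
          (if (h' = b ∧ g ≠ D.invA a) then (1:ℤ) else 0) = _
      rw [ite_one_zero_mul]
      refine if_congr ?_ rfl rfl
      constructor
      · rintro ⟨⟨h1, hd⟩, h3, hg⟩
        have heq := D.inj_a'b' ht ht₂R h1.symm h3
        simp only [Prod.mk.injEq] at heq
        obtain ⟨hge, hhf, -, -⟩ := heq
        refine ⟨Subtype.ext (D.inj_a'b' ht ht₂R h1.symm h3), ?_, ?_⟩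
        · intro hd'
          exact hd (by rw [hhf]; exact (D.claim2 hs ht₂R).2 hd')
        · intro hc
          exact hg (by rw [hge]; exact (D.claim1 hr ht₂R).2 hc)
      · rintro ⟨hteq, hd', hc⟩
        have heq : (g, h, h', g') = (e, f, b, c) := congrArg Subtype.val hteq
        simp only [Prod.mk.injEq] at heq
        obtain ⟨hge, hhf, hh'b, hg'c⟩ := heq
        refine ⟨⟨hg'c.symm, ?_⟩, hh'b, ?_⟩
        · intro hd
          exact hd' ((D.claim2 hs ht₂R).1 (by rw [← hhf]; exact hd))
        · intro hg
          exact hc ((D.claim1 hr ht₂R).1 (by rw [← hge]; exact hg))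
    rw [Finset.sum_congr rfl (fun t _ => hterm t)]
    by_cases hQ : d' ≠ D.invB b ∧ c ≠ D.invA a'
    · simp [hQ, Finset.sum_ite_eq']
    · simp [hQ]
  refine ⟨?_, fun s r => by rw [key]; split_ifs <;> simp⟩
  ext s r
  rw [key, key2]
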